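/- arXiv:1804.00279 — 2 statements merged into one kernel-verified Lean document; each statement's English description precedes it below -/
import Mathlib

section
/- Under the semi-frame hypotheses, the following are equivalent: (i) (R^{12}_a ⊗_{C₁₂₃} R^{23}_b) ⊗_{C₁₃₄} R^{34}_c = R^{12}_a ⊗_{C₁₂₄} (R^{23}_b ⊗_{C₂₃₄} R^{34}_c) for some a ∈ G₁⧸H₁₂, b ∈ G₂⧸H₂₃, c ∈ G₃⧸H₃₄; (ii) this equation holds for all such a, b, c; (iii) C₁₂₃·C₁₃₄ = φ₁₂⁻¹[C₂₃₄·K₁₂]·C₁₂₄. (Associative Law Theorem.) -/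
/-!
For a union of cosets `K`, the relation `unionAtoms φ K` determines `K`, so both sides of the
associative law reduce to subsets of `G₁`: `(R_a ⊗ R_b) ⊗ R_c` to
`⟨a⟩·φ₁₂⁻¹[⟨b⟩]·C₁₂₃·φ₁₃⁻¹[⟨c⟩]·C₁₃₄` and `R_a ⊗ (R_b ⊗ R_c)` to
`⟨a⟩·φ₁₂⁻¹[⟨b⟩]·φ₁₂⁻¹[φ₂₃⁻¹[⟨c⟩]]·φ₁₂⁻¹[C₂₃₄]·C₁₂₄`. The semi-frame condition for `(1,2,3)`
moves `C₁₂₃` across: `C₁₂₃·φ₁₃⁻¹[S] = φ₁₂⁻¹[φ₂₃⁻¹[S]]·C₁₂₃`. Both sides then share the left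
factor `⟨a⟩·φ₁₂⁻¹[⟨b⟩]·φ₁₂⁻¹[φ₂₃⁻¹[⟨c⟩]]`, a coset of a subgroup of `J = H₁₂H₁₃H₁₄`, followed by
the `J`-cosets `C₁₂₃·C₁₃₄` and `φ₁₂⁻¹[C₂₃₄]·C₁₂₄`. The factor cancels, so the equation holds
exactly when these two cosets agree, whatever `a`, `b`, `c` are.
-/

open scoped Pointwise

namespace CosetRA

variable {G G' : Type*}

/-- The coset of `a : G ⧸ N` as a subset of `G`: `⟨a⟩ = {g : G | [g]_N = a}`. -/
def cosetOf [Group G] (N : Subgroup G) (a : G ⧸ N) : Set G :=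
  {g : G | (g : G ⧸ N) = a}

/-- Forward image `φ[S]` of a subset `S ⊆ G` under a quotient isomorphism. -/
def fwd [Group G] [Group G'] (N : Subgroup G) (M : Subgroup G')
    [N.Normal] [M.Normal] (φ : G ⧸ N ≃* G' ⧸ M) (S : Set G) : Set G' :=
  {h : G' | ∃ g ∈ S, φ (g : G ⧸ N) = (h : G' ⧸ M)}

/-- Inverse image `φ⁻¹[S']` of a subset `S' ⊆ G'` under a quotient isomorphism. -/
def bwd [Group G] [Group G'] (N : Subgroup G) (M : Subgroup G')
    [N.Normal] [M.Normal] (φ : G ⧸ N ≃* G' ⧸ M) (S' : Set G') : Set G :=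
  {g : G | ∃ h ∈ S', φ (g : G ⧸ N) = (h : G' ⧸ M)}

/-- The atomic relation `R_a = {(g,h) : [h]_M = φ([g]_N)·φ(a)}`. -/
def atom [Group G] [Group G'] (N : Subgroup G) (M : Subgroup G')
    [N.Normal] [M.Normal] (φ : G ⧸ N ≃* G' ⧸ M) (a : G ⧸ N) : Set (G × G') :=
  {p : G × G' | (p.2 : G' ⧸ M) = φ (p.1 : G ⧸ N) * φ a}

/-- Converse of a relation: `R˘ = {(v,u) : (u,v) ∈ R}`. -/
def conv {α β : Type*} (R : Set (α × β)) : Set (β × α) := {p | (p.2, p.1) ∈ R}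

/-- Relational composition `R ∘ S`. -/
def rcomp {α β γ : Type*} (R : Set (α × β)) (S : Set (β × γ)) : Set (α × γ) :=
  {p | ∃ v, (p.1, v) ∈ R ∧ (v, p.2) ∈ S}

/-- `C` is a left coset of the set `P`. -/
def IsLeftCosetSet [Group G] (P C : Set G) : Prop := ∃ g : G, C = g • P

/-- `Q` is a union of left cosets of the set `P`. -/
def IsUnionOfCosets [Group G] (P Q : Set G) : Prop := ∀ g ∈ Q, g • P ⊆ Q

/-- The union of all atomic relations `R_c` with `⟨c⟩ ⊆ K`. -/
def unionAtoms [Group G] [Group G'] (N : Subgroup G) (M : Subgroup G')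
    [N.Normal] [M.Normal] (φ : G ⧸ N ≃* G' ⧸ M) (K : Set G) : Set (G × G') :=
  ⋃ c ∈ {c : G ⧸ N | cosetOf N c ⊆ K}, atom N M φ c

section Cosets

variable [Group G] {N X Y : Subgroup G}

@[simp] lemma mem_cosetOf {a : G ⧸ N} {g : G} : g ∈ cosetOf N a ↔ (g : G ⧸ N) = a := Iff.rfl

lemma cosetOf_mk (g : G) : cosetOf N g = g • (N : Set G) := by
  ext x
  rw [mem_leftCoset_iff, mem_cosetOf, eq_comm, QuotientGroup.eq, SetLike.mem_coe]

lemma isLeftCosetSet_cosetOf (a : G ⧸ N) : IsLeftCosetSet (N : Set G) (cosetOf N a) :=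
  ⟨a.out, by rw [← cosetOf_mk, QuotientGroup.out_eq']⟩

lemma cosetOf_subset {K : Set G} (hK : IsUnionOfCosets (N : Set G) K) {g : G} (hg : g ∈ K) :
    cosetOf N g ⊆ K := by
  rw [cosetOf_mk]
  exact hK g hg

lemma biUnion_cosetOf {D : Set G} (hD : IsUnionOfCosets (N : Set G) D) :
    ⋃ a ∈ {a : G ⧸ N | cosetOf N a ⊆ D}, cosetOf N a = D := by
  refine subset_antisymm (Set.iUnion₂_subset fun _ h ↦ h) fun g hg ↦ ?_
  exact Set.mem_iUnion₂.2 ⟨g, cosetOf_subset hD hg, rfl⟩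

lemma coe_mul_coe_of_le (h : Y ≤ X) : (X : Set G) * Y = X :=
  subset_antisymm (Set.mul_subset_iff.2 fun _ hx _ hy ↦ X.mul_mem hx (h hy))
    fun x hx ↦ ⟨x, hx, 1, Y.one_mem, mul_one x⟩

lemma IsLeftCosetSet.isUnionOfCosets_mul {C : Set G} (hC : IsLeftCosetSet (Y : Set G) C)
    (hN : N ≤ Y) (S : Set G) : IsUnionOfCosets (N : Set G) (S * C) := by
  obtain ⟨g, rfl⟩ := hC
  rintro _ ⟨s, hs, _, ⟨y, hy, rfl⟩, rfl⟩ _ ⟨n, hn, rfl⟩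
  exact ⟨s, hs, g • (y * n), ⟨y * n, Y.mul_mem hy (hN hn), rfl⟩, by simp [smul_eq_mul, mul_assoc]⟩

lemma coe_mul_smul [X.Normal] (h : G) (T : Set G) :
    (X : Set G) * (h • T) = h • ((X : Set G) * T) := by
  rw [← Set.op_smul_set_mul_eq_mul_smul_set, ← eq_cosets_of_normal _ ‹_›, smul_mul_assoc]

lemma IsLeftCosetSet.mul [X.Normal] {S T : Set G} (hS : IsLeftCosetSet (X : Set G) S)
    (hT : IsLeftCosetSet (Y : Set G) T) :
    IsLeftCosetSet ((X ⊔ Y : Subgroup G) : Set G) (S * T) := by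
  obtain ⟨g, rfl⟩ := hS
  obtain ⟨h, rfl⟩ := hT
  exact ⟨g * h, by rw [smul_mul_assoc, coe_mul_smul, smul_smul, Subgroup.normal_mul]⟩

lemma IsLeftCosetSet.coe_mul [X.Normal] {C : Set G} (hC : IsLeftCosetSet (X : Set G) C) :
    (X : Set G) * C = C := by
  obtain ⟨g, rfl⟩ := hC
  rw [coe_mul_smul, coe_mul_coe_of_le le_rfl]

lemma IsLeftCosetSet.mul_coe_of_le {C : Set G} (hC : IsLeftCosetSet (X : Set G) C) (h : Y ≤ X) :
    C * (Y : Set G) = C := by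
  obtain ⟨g, rfl⟩ := hC
  rw [smul_mul_assoc, coe_mul_coe_of_le h]

lemma IsLeftCosetSet.mul_inv [X.Normal] {C : Set G} (hC : IsLeftCosetSet (X : Set G) C) :
    C * C⁻¹ = X := by
  obtain ⟨g, rfl⟩ := hC
  rw [Set.inv_smul_set_distrib, inv_coe_set, ← eq_cosets_of_normal _ ‹_›, smul_mul_assoc,
    coe_mul_smul, smul_smul, mul_inv_cancel, one_smul, coe_mul_coe_of_le le_rfl]

lemma IsLeftCosetSet.mul_left_cancel_iff [X.Normal] (hYX : Y ≤ X) {C S T : Set G}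
    (hC : IsLeftCosetSet (Y : Set G) C) (hS : IsLeftCosetSet (X : Set G) S)
    (hT : IsLeftCosetSet (X : Set G) T) : C * S = C * T ↔ S = T := by
  obtain ⟨g, rfl⟩ := hC
  have absorb : ∀ {S}, IsLeftCosetSet (X : Set G) S → (Y : Set G) * S = S := fun hS ↦
    subset_antisymm ((Set.mul_subset_mul_right hYX).trans hS.coe_mul.subset)
      fun s hs ↦ ⟨1, Y.one_mem, s, hs, one_mul s⟩
  rw [smul_mul_assoc, smul_mul_assoc, absorb hS, absorb hT, smul_left_cancel_iff]

end Cosets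

section Images

variable [Group G] [Group G'] {N : Subgroup G} {M : Subgroup G'} [N.Normal] [M.Normal]
  (φ : G ⧸ N ≃* G' ⧸ M)

@[simp] lemma mem_fwd {S : Set G} {h : G'} :
    h ∈ fwd N M φ S ↔ ∃ g ∈ S, φ (g : G ⧸ N) = (h : G' ⧸ M) := Iff.rfl

@[simp] lemma mem_bwd {S : Set G'} {g : G} :
    g ∈ bwd N M φ S ↔ ∃ h ∈ S, φ (g : G ⧸ N) = (h : G' ⧸ M) := Iff.rfl

lemma bwd_eq_fwd_symm (S : Set G') : bwd N M φ S = fwd M N φ.symm S := by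
  ext g
  simp only [mem_bwd, mem_fwd, MulEquiv.symm_apply_eq, @eq_comm _ (φ _)]

lemma fwd_eq_bwd_symm (S : Set G) : fwd N M φ S = bwd M N φ.symm S := by
  rw [bwd_eq_fwd_symm, MulEquiv.symm_symm]

lemma fwd_mul (S T : Set G) : fwd N M φ (S * T) = fwd N M φ S * fwd N M φ T := by
  ext h
  constructor
  · rintro ⟨_, ⟨s, hs, t, ht, rfl⟩, he⟩
    refine ⟨(φ s).out, ⟨s, hs, by simp⟩, (φ s).out⁻¹ * h, ⟨t, ht, ?_⟩, mul_inv_cancel_left _ _⟩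
    rw [QuotientGroup.mk_mul, ← he, QuotientGroup.mk_inv, QuotientGroup.out_eq',
      QuotientGroup.mk_mul, map_mul, inv_mul_cancel_left]
  · rintro ⟨h₁, ⟨s, hs, hs'⟩, h₂, ⟨t, ht, ht'⟩, rfl⟩
    exact ⟨s * t, Set.mul_mem_mul hs ht, by rw [QuotientGroup.mk_mul, map_mul, hs', ht']; rfl⟩

lemma bwd_mul (S T : Set G') : bwd N M φ (S * T) = bwd N M φ S * bwd N M φ T := by
  simp only [bwd_eq_fwd_symm, fwd_mul]

lemma bwd_fwd (S : Set G) : bwd N M φ (fwd N M φ S) = S * N := by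
  ext g
  simp only [mem_bwd, mem_fwd]
  constructor
  · rintro ⟨_, ⟨s, hs, hs'⟩, he⟩
    exact ⟨s, hs, s⁻¹ * g, QuotientGroup.eq.1 (φ.injective (hs'.trans he.symm)),
      mul_inv_cancel_left s g⟩
  · rintro ⟨s, hs, n, hn, rfl⟩
    refine ⟨(φ s).out, ⟨s, hs, by simp⟩, ?_⟩
    rw [QuotientGroup.out_eq', QuotientGroup.mk_mul, (QuotientGroup.eq_one_iff n).2 hn, mul_one]

lemma fwd_coe : fwd N M φ (N : Set G) = M := by
  ext h
  simp only [mem_fwd, SetLike.mem_coe, ← QuotientGroup.eq_one_iff]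
  exact ⟨fun ⟨n, hn, he⟩ ↦ by rw [← he, hn, map_one], fun hh ↦ ⟨1, rfl, by rw [hh]; simp⟩⟩

lemma bwd_coe : bwd N M φ (M : Set G') = N := by
  rw [bwd_eq_fwd_symm, fwd_coe]

lemma coe_mul_fwd (S : Set G) : (M : Set G') * fwd N M φ S = fwd N M φ S := by
  refine subset_antisymm ?_ fun h hh ↦ ⟨1, M.one_mem, h, hh, one_mul h⟩
  rintro _ ⟨m, hm, h, ⟨s, hs, he⟩, rfl⟩
  exact ⟨s, hs, by rw [he, QuotientGroup.mk_mul, (QuotientGroup.eq_one_iff m).2 hm, one_mul]⟩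

lemma coe_mul_bwd (S : Set G') : (N : Set G) * bwd N M φ S = bwd N M φ S := by
  rw [bwd_eq_fwd_symm, coe_mul_fwd]

lemma bwd_coe_mul (S : Set G') : bwd N M φ ((M : Set G') * S) = bwd N M φ S := by
  rw [bwd_mul, bwd_coe, coe_mul_bwd]

lemma bwd_mul_coe (S : Set G') : bwd N M φ (S * (M : Set G')) = bwd N M φ S := by
  rw [Subgroup.set_mul_normal_comm, bwd_coe_mul]

lemma bwd_fwd_mul (S : Set G) (T : Set G') :
    bwd N M φ (fwd N M φ S * T) = S * bwd N M φ T := by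
  rw [bwd_mul, bwd_fwd, mul_assoc, coe_mul_bwd]

lemma fwd_bwd_mul (S : Set G') (T : Set G) :
    fwd N M φ (bwd N M φ S * T) = S * fwd N M φ T := by
  have h := bwd_fwd_mul φ.symm S T
  rwa [← bwd_eq_fwd_symm, ← fwd_eq_bwd_symm, ← fwd_eq_bwd_symm] at h

lemma fwd_cosetOf (a : G ⧸ N) : fwd N M φ (cosetOf N a) = cosetOf M (φ a) := by
  ext h
  simp only [mem_fwd, mem_cosetOf]
  exact ⟨fun ⟨g, hg, he⟩ ↦ hg ▸ he.symm,
    fun he ↦ ⟨a.out, QuotientGroup.out_eq' a, by rw [QuotientGroup.out_eq', he]⟩⟩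

lemma bwd_cosetOf_apply_mul (a : G ⧸ N) (S : Set G') :
    bwd N M φ (cosetOf M (φ a) * S) = cosetOf N a * bwd N M φ S := by
  rw [← fwd_cosetOf, bwd_fwd_mul]

lemma bwd_biUnion {ι : Type*} (s : Set ι) (S : ι → Set G') :
    bwd N M φ (⋃ i ∈ s, S i) = ⋃ i ∈ s, bwd N M φ (S i) := by
  ext g
  simp only [mem_bwd, Set.mem_iUnion₂]
  exact ⟨fun ⟨h, ⟨i, hi, hh⟩, he⟩ ↦ ⟨i, hi, h, hh, he⟩,
    fun ⟨i, hi, h, hh, he⟩ ↦ ⟨h, ⟨i, hi, hh⟩, he⟩⟩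

lemma bwd_smul {g : G} {h : G'} (hgh : φ (g : G ⧸ N) = (h : G' ⧸ M)) (S : Set G') :
    bwd N M φ (h • S) = g • bwd N M φ S := by
  ext x
  simp only [mem_leftCoset_iff, mem_bwd, QuotientGroup.mk_mul, QuotientGroup.mk_inv, map_mul,
    map_inv, hgh]
  constructor
  · rintro ⟨y, hy, he⟩
    exact ⟨h⁻¹ * y, hy, by rw [he, QuotientGroup.mk_mul, QuotientGroup.mk_inv]⟩
  · rintro ⟨s, hs, he⟩
    exact ⟨h * s, by rwa [inv_mul_cancel_left],
      by rw [QuotientGroup.mk_mul, ← he, mul_inv_cancel_left]⟩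

lemma IsLeftCosetSet.bwd {Y S : Set G'} (hS : IsLeftCosetSet Y S) :
    IsLeftCosetSet (bwd N M φ Y) (bwd N M φ S) := by
  obtain ⟨h, rfl⟩ := hS
  exact ⟨_, bwd_smul φ (by rw [QuotientGroup.out_eq', φ.apply_symm_apply]) Y⟩

lemma bwd_eq_of_fwd_eq {X : Subgroup G} (hNX : N ≤ X) {Y : Set G'}
    (h : fwd N M φ (X : Set G) = (M : Set G') * Y) : bwd N M φ Y = X := by
  rw [← bwd_coe_mul, ← h, bwd_fwd, coe_mul_coe_of_le hNX]

end Images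

section Atoms

variable [Group G] [Group G'] {N : Subgroup G} {M : Subgroup G'} [N.Normal] [M.Normal]
  (φ : G ⧸ N ≃* G' ⧸ M)

lemma mem_unionAtoms {K : Set G} {p : G × G'} :
    p ∈ unionAtoms N M φ K ↔ ∃ c, cosetOf N c ⊆ K ∧ (p.2 : G' ⧸ M) = φ p.1 * φ c := by
  simp [unionAtoms, atom]

lemma unionAtoms_mono {K K' : Set G} (h : K ⊆ K') : unionAtoms N M φ K ⊆ unionAtoms N M φ K' :=
  Set.biUnion_subset_biUnion_left fun _ hc ↦ Set.Subset.trans hc h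

lemma biUnion_unionAtoms {ι : Type*} (s : Set ι) {K : ι → Set G}
    (hK : ∀ i ∈ s, IsUnionOfCosets (N : Set G) (K i)) :
    ⋃ i ∈ s, unionAtoms N M φ (K i) = unionAtoms N M φ (⋃ i ∈ s, K i) := by
  refine subset_antisymm (Set.iUnion₂_subset fun i hi ↦ unionAtoms_mono φ
    (Set.subset_biUnion_of_mem (u := K) hi)) fun p hp ↦ ?_
  obtain ⟨c, hc, hp⟩ := (mem_unionAtoms φ).1 hp
  obtain ⟨i, hi, hci⟩ := Set.mem_iUnion₂.1 (hc (QuotientGroup.out_eq' c))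
  refine Set.mem_iUnion₂.2 ⟨i, hi, (mem_unionAtoms φ).2 ⟨c, ?_, hp⟩⟩
  simpa only [QuotientGroup.out_eq'] using cosetOf_subset (hK i hi) hci

lemma unionAtoms_subset_unionAtoms_iff {S T : Set G} (hS : IsUnionOfCosets (N : Set G) S) :
    unionAtoms N M φ S ⊆ unionAtoms N M φ T ↔ S ⊆ T := by
  refine ⟨fun h t ht ↦ ?_, unionAtoms_mono φ⟩
  have hmem : ((1 : G), (φ t).out) ∈ unionAtoms N M φ S :=
    (mem_unionAtoms φ).2 ⟨t, cosetOf_subset hS ht, by simp⟩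
  obtain ⟨c, hc, he⟩ := (mem_unionAtoms φ).1 (h hmem)
  simp only [QuotientGroup.out_eq', QuotientGroup.mk_one, map_one, one_mul] at he
  exact hc (φ.injective he)

lemma unionAtoms_inj {S T : Set G} (hS : IsUnionOfCosets (N : Set G) S)
    (hT : IsUnionOfCosets (N : Set G) T) : unionAtoms N M φ S = unionAtoms N M φ T ↔ S = T := by
  rw [subset_antisymm_iff, unionAtoms_subset_unionAtoms_iff φ hS,
    unionAtoms_subset_unionAtoms_iff φ hT, ← subset_antisymm_iff]

end Atoms

section SemiFrame

variable {G₁ G₂ G₃ : Type*} [Group G₁] [Group G₂] [Group G₃]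
  {H₁₂ H₁₃ : Subgroup G₁} {K₁₂ H₂₃ : Subgroup G₂} {K₁₃ K₂₃ : Subgroup G₃}
  [H₁₂.Normal] [H₁₃.Normal] [K₁₂.Normal] [H₂₃.Normal] [K₁₃.Normal] [K₂₃.Normal]
  {φ₁₂ : G₁ ⧸ H₁₂ ≃* G₂ ⧸ K₁₂} {φ₁₃ : G₁ ⧸ H₁₃ ≃* G₃ ⧸ K₁₃} {φ₂₃ : G₂ ⧸ H₂₃ ≃* G₃ ⧸ K₂₃}

theorem mul_bwd_eq_bwd_bwd_mul {C : Set G₁}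
    (hC : IsLeftCosetSet ((H₁₂ : Set G₁) * (H₁₃ : Set G₁)) C)
    (ha : fwd H₁₂ K₁₂ φ₁₂ ((H₁₂ : Set G₁) * (H₁₃ : Set G₁)) = (K₁₂ : Set G₂) * (H₂₃ : Set G₂))
    (hb : fwd H₂₃ K₂₃ φ₂₃ ((K₁₂ : Set G₂) * (H₂₃ : Set G₂)) = (K₁₃ : Set G₃) * (K₂₃ : Set G₃))
    (hc : fwd H₁₃ K₁₃ φ₁₃ ((H₁₂ : Set G₁) * (H₁₃ : Set G₁)) = (K₁₃ : Set G₃) * (K₂₃ : Set G₃))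
    (hd : ∀ Q : Set G₁, IsUnionOfCosets ((H₁₂ : Set G₁) * (H₁₃ : Set G₁)) Q →
      fwd H₂₃ K₂₃ φ₂₃ (fwd H₁₂ K₁₂ φ₁₂ Q) = fwd H₁₃ K₁₃ φ₁₃ (C⁻¹ * Q * C))
    (S : Set G₃) :
    C * bwd H₁₃ K₁₃ φ₁₃ S = bwd H₁₂ K₁₂ φ₁₂ (bwd H₂₃ K₂₃ φ₂₃ S) * C := by
  rw [← Subgroup.normal_mul] at hC ha hc hd
  set P := H₁₂ ⊔ H₁₃
  set B := bwd H₁₂ K₁₂ φ₁₂ (bwd H₂₃ K₂₃ φ₂₃ S)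
  have hQ : IsUnionOfCosets (P : Set G₁) (B * (P : Set G₁)) :=
    IsLeftCosetSet.isUnionOfCosets_mul ⟨1, (one_smul _ _).symm⟩ le_rfl B
  -- the semi-frame condition for `Q = B·P`, pulled back along `φ₁₃`
  have key : bwd H₁₃ K₁₃ φ₁₃ S * (P : Set G₁) = C⁻¹ * (B * (P : Set G₁)) * C := by
    have h := congrArg (bwd H₁₃ K₁₃ φ₁₃) (hd _ hQ)
    rwa [fwd_bwd_mul, ha, fwd_bwd_mul, hb, ← hc, bwd_mul, bwd_fwd, bwd_fwd,
      coe_mul_coe_of_le le_sup_right, mul_assoc (C⁻¹ * _), hC.mul_coe_of_le le_sup_right] at h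
  calc C * bwd H₁₃ K₁₃ φ₁₃ S = C * (bwd H₁₃ K₁₃ φ₁₃ S * (P : Set G₁)) := by
        rw [Subgroup.set_mul_normal_comm, ← mul_assoc, hC.mul_coe_of_le le_rfl]
    _ = C * C⁻¹ * (B * (P : Set G₁)) * C := by
        rw [key]
        simp only [mul_assoc]
    _ = B * C := by
        rw [hC.mul_inv, ← Subgroup.set_mul_normal_comm]
        simp only [mul_assoc]
        rw [hC.coe_mul, hC.coe_mul]

end SemiFrame

section Composition

variable {G G' G'' : Type*} [Group G] [Group G'] [Group G'']
  {N N' : Subgroup G} {M N'' : Subgroup G'} {M' : Subgroup G''}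
  [N.Normal] [N'.Normal] [M.Normal] [M'.Normal]
  (φ : G ⧸ N ≃* G' ⧸ M) (ψ : G ⧸ N' ≃* G'' ⧸ M')

lemma biUnion_unionAtoms_bwd_cosetOf_apply_mul {A : Set G} (hA : IsUnionOfCosets (N : Set G) A)
    (S : Set G') {Y : Subgroup G} {C : Set G} (hC : IsLeftCosetSet (Y : Set G) C) (hY : N' ≤ Y) :
    ⋃ a ∈ {a : G ⧸ N | cosetOf N a ⊆ A}, unionAtoms N' M' ψ (bwd N M φ (cosetOf M (φ a) * S) * C)
      = unionAtoms N' M' ψ (A * bwd N M φ S * C) := by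
  simp_rw [bwd_cosetOf_apply_mul]
  rw [biUnion_unionAtoms ψ _ fun _ _ ↦ hC.isUnionOfCosets_mul hY _, ← Set.iUnion₂_mul,
    ← Set.iUnion₂_mul, biUnion_cosetOf hA]

lemma biUnion_unionAtoms_bwd_mul_cosetOf {D : Set G'} (hD : IsUnionOfCosets (N'' : Set G') D)
    (E : Set G') {Y : Subgroup G} {C : Set G} (hC : IsLeftCosetSet (Y : Set G) C) (hY : N' ≤ Y) :
    ⋃ e ∈ {e : G' ⧸ N'' | cosetOf N'' e ⊆ D}, unionAtoms N' M' ψ (bwd N M φ (E * cosetOf N'' e) * C)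
      = unionAtoms N' M' ψ (bwd N M φ (E * D) * C) := by
  rw [biUnion_unionAtoms ψ _ fun _ _ ↦ hC.isUnionOfCosets_mul hY _, ← Set.iUnion₂_mul,
    ← bwd_biUnion, ← Set.mul_iUnion₂, biUnion_cosetOf hD]

end Composition

section Associativity

variable {G₁ G₂ G₃ G₄ : Type*} [Group G₁] [Group G₂] [Group G₃] [Group G₄]
  {H₁₂ H₁₃ H₁₄ : Subgroup G₁} {K₁₂ H₂₃ H₂₄ : Subgroup G₂} {K₁₃ K₂₃ H₃₄ : Subgroup G₃}
  {K₁₄ : Subgroup G₄} [H₁₂.Normal] [H₁₃.Normal] [H₁₄.Normal] [K₁₂.Normal] [H₂₃.Normal]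
  [K₁₃.Normal] [K₂₃.Normal] [K₁₄.Normal]
  {φ₁₂ : G₁ ⧸ H₁₂ ≃* G₂ ⧸ K₁₂} {φ₁₃ : G₁ ⧸ H₁₃ ≃* G₃ ⧸ K₁₃} {φ₁₄ : G₁ ⧸ H₁₄ ≃* G₄ ⧸ K₁₄}
  {φ₂₃ : G₂ ⧸ H₂₃ ≃* G₃ ⧸ K₂₃} {C₁₂₃ C₁₃₄ C₁₂₄ : Set G₁} {C₂₃₄ : Set G₂}

theorem tensor_assoc_iff
    (hC₁₂₃ : IsLeftCosetSet ((H₁₂ : Set G₁) * (H₁₃ : Set G₁)) C₁₂₃)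
    (hC₁₃₄ : IsLeftCosetSet ((H₁₃ : Set G₁) * (H₁₄ : Set G₁)) C₁₃₄)
    (hC₂₃₄ : IsLeftCosetSet ((H₂₃ : Set G₂) * (H₂₄ : Set G₂)) C₂₃₄)
    (hC₁₂₄ : IsLeftCosetSet ((H₁₂ : Set G₁) * (H₁₄ : Set G₁)) C₁₂₄)
    (h123a : fwd H₁₂ K₁₂ φ₁₂ ((H₁₂ : Set G₁) * (H₁₃ : Set G₁)) = (K₁₂ : Set G₂) * (H₂₃ : Set G₂))
    (h123b : fwd H₂₃ K₂₃ φ₂₃ ((K₁₂ : Set G₂) * (H₂₃ : Set G₂)) = (K₁₃ : Set G₃) * (K₂₃ : Set G₃))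
    (h123c : fwd H₁₃ K₁₃ φ₁₃ ((H₁₂ : Set G₁) * (H₁₃ : Set G₁)) = (K₁₃ : Set G₃) * (K₂₃ : Set G₃))
    (h123d : ∀ Q : Set G₁, IsUnionOfCosets ((H₁₂ : Set G₁) * (H₁₃ : Set G₁)) Q →
      fwd H₂₃ K₂₃ φ₂₃ (fwd H₁₂ K₁₂ φ₁₂ Q) = fwd H₁₃ K₁₃ φ₁₃ (C₁₂₃⁻¹ * Q * C₁₂₃))
    (h124a : fwd H₁₂ K₁₂ φ₁₂ ((H₁₂ : Set G₁) * (H₁₄ : Set G₁)) = (K₁₂ : Set G₂) * (H₂₄ : Set G₂))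
    (h234a : fwd H₂₃ K₂₃ φ₂₃ ((H₂₃ : Set G₂) * (H₂₄ : Set G₂)) = (K₂₃ : Set G₃) * (H₃₄ : Set G₃))
    (a : G₁ ⧸ H₁₂) (b : G₂ ⧸ H₂₃) (c : G₃ ⧸ H₃₄) :
    (⋃ γ ∈ {γ : G₁ ⧸ H₁₃ |
          cosetOf H₁₃ γ ⊆ bwd H₁₂ K₁₂ φ₁₂ (cosetOf K₁₂ (φ₁₂ a) * cosetOf H₂₃ b) * C₁₂₃},
        unionAtoms H₁₄ K₁₄ φ₁₄ (bwd H₁₃ K₁₃ φ₁₃ (cosetOf K₁₃ (φ₁₃ γ) * cosetOf H₃₄ c) * C₁₃₄)) =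
      (⋃ e ∈ {e : G₂ ⧸ H₂₄ |
          cosetOf H₂₄ e ⊆ bwd H₂₃ K₂₃ φ₂₃ (cosetOf K₂₃ (φ₂₃ b) * cosetOf H₃₄ c) * C₂₃₄},
        unionAtoms H₁₄ K₁₄ φ₁₄ (bwd H₁₂ K₁₂ φ₁₂ (cosetOf K₁₂ (φ₁₂ a) * cosetOf H₂₄ e) * C₁₂₄))
      ↔ C₁₂₃ * C₁₃₄ = bwd H₁₂ K₁₂ φ₁₂ (C₂₃₄ * (K₁₂ : Set G₂)) * C₁₂₄ := by
  have hcomm := mul_bwd_eq_bwd_bwd_mul hC₁₂₃ h123a h123b h123c h123d (cosetOf H₃₄ c)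
  rw [← Subgroup.normal_mul] at hC₁₂₃ hC₁₃₄ hC₂₃₄ hC₁₂₄ h123a h124a h234a
  have hb : bwd H₁₂ K₁₂ φ₁₂ (H₂₃ : Set G₂) = ↑(H₁₂ ⊔ H₁₃) :=
    bwd_eq_of_fwd_eq φ₁₂ le_sup_left h123a
  have hJ : bwd H₁₂ K₁₂ φ₁₂ ↑(H₂₃ ⊔ H₂₄) = ↑(H₁₂ ⊔ H₁₃ ⊔ H₁₄) := by
    rw [Subgroup.normal_mul, bwd_mul, hb, bwd_eq_of_fwd_eq φ₁₂ le_sup_left h124a,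
      ← Subgroup.normal_mul, ← sup_sup_distrib_left, sup_assoc]
  have hX : IsLeftCosetSet ((H₁₂ ⊔ (H₁₂ ⊔ H₁₃) ⊔ (H₁₂ ⊔ H₁₃ ⊔ H₁₄) : Subgroup G₁) : Set G₁)
      (cosetOf H₁₂ a * bwd H₁₂ K₁₂ φ₁₂ (cosetOf H₂₃ b) *
        bwd H₁₂ K₁₂ φ₁₂ (bwd H₂₃ K₂₃ φ₂₃ (cosetOf H₃₄ c))) := by
    refine ((isLeftCosetSet_cosetOf a).mul ?_).mul ?_
    · simpa only [hb] using (isLeftCosetSet_cosetOf b).bwd φ₁₂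
    · simpa only [bwd_eq_of_fwd_eq φ₂₃ le_sup_left h234a, hJ]
        using ((isLeftCosetSet_cosetOf c).bwd φ₂₃).bwd φ₁₂
  have hS : IsLeftCosetSet ((H₁₂ ⊔ H₁₃ ⊔ H₁₄ : Subgroup G₁) : Set G₁) (C₁₂₃ * C₁₃₄) := by
    rw [sup_assoc, ← sup_left_idem H₁₃, ← sup_assoc]
    exact hC₁₂₃.mul hC₁₃₄
  have hT : IsLeftCosetSet ((H₁₂ ⊔ H₁₃ ⊔ H₁₄ : Subgroup G₁) : Set G₁)
      (bwd H₁₂ K₁₂ φ₁₂ C₂₃₄ * C₁₂₄) := by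
    have h := hC₂₃₄.bwd φ₁₂
    rw [hJ] at h
    rw [← sup_eq_left.2 (sup_le_sup_right le_sup_left H₁₄)]
    exact h.mul hC₁₂₄
  rw [biUnion_unionAtoms_bwd_cosetOf_apply_mul φ₁₃ φ₁₄ (hC₁₂₃.isUnionOfCosets_mul le_sup_right _)
      _ hC₁₃₄ le_sup_right,
    biUnion_unionAtoms_bwd_mul_cosetOf φ₁₂ φ₁₄ (hC₂₃₄.isUnionOfCosets_mul le_sup_right _)
      _ hC₁₂₄ le_sup_right,
    unionAtoms_inj φ₁₄ (hC₁₃₄.isUnionOfCosets_mul le_sup_right _)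
      (hC₁₂₄.isUnionOfCosets_mul le_sup_right _),
    bwd_cosetOf_apply_mul, bwd_cosetOf_apply_mul, bwd_cosetOf_apply_mul, bwd_mul, bwd_mul,
    bwd_mul_coe φ₁₂ C₂₃₄, mul_assoc _ C₁₂₃, hcomm]
  simpa only [mul_assoc] using hX.mul_left_cancel_iff
    (sup_le (sup_le (le_sup_left.trans le_sup_left) le_sup_left) le_rfl) hS hT

end Associativity

theorem associative_law_theorem_general
    {G₁ G₂ G₃ G₄ : Type*} [Group G₁] [Group G₂] [Group G₃] [Group G₄]
    (H₁₂ : Subgroup G₁) (K₁₂ : Subgroup G₂) (H₁₃ : Subgroup G₁) (K₁₃ : Subgroup G₃)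
    (H₁₄ : Subgroup G₁) (K₁₄ : Subgroup G₄) (H₂₃ : Subgroup G₂) (K₂₃ : Subgroup G₃)
    (H₂₄ : Subgroup G₂) (H₃₄ : Subgroup G₃)
    [H₁₂.Normal] [K₁₂.Normal] [H₁₃.Normal] [K₁₃.Normal] [H₁₄.Normal] [K₁₄.Normal]
    [H₂₃.Normal] [K₂₃.Normal]
    (φ₁₂ : G₁ ⧸ H₁₂ ≃* G₂ ⧸ K₁₂) (φ₁₃ : G₁ ⧸ H₁₃ ≃* G₃ ⧸ K₁₃)
    (φ₁₄ : G₁ ⧸ H₁₄ ≃* G₄ ⧸ K₁₄) (φ₂₃ : G₂ ⧸ H₂₃ ≃* G₃ ⧸ K₂₃)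
    (C₁₂₃ : Set G₁) (hC₁₂₃ : IsLeftCosetSet ((H₁₂ : Set G₁) * (H₁₃ : Set G₁)) C₁₂₃)
    (C₁₃₄ : Set G₁) (hC₁₃₄ : IsLeftCosetSet ((H₁₃ : Set G₁) * (H₁₄ : Set G₁)) C₁₃₄)
    (C₂₃₄ : Set G₂) (hC₂₃₄ : IsLeftCosetSet ((H₂₃ : Set G₂) * (H₂₄ : Set G₂)) C₂₃₄)
    (C₁₂₄ : Set G₁) (hC₁₂₄ : IsLeftCosetSet ((H₁₂ : Set G₁) * (H₁₄ : Set G₁)) C₁₂₄)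
    -- semi-frame conditions for the triple (1,2,3)
    (h123a : fwd H₁₂ K₁₂ φ₁₂ ((H₁₂ : Set G₁) * (H₁₃ : Set G₁)) = (K₁₂ : Set G₂) * (H₂₃ : Set G₂))
    (h123b : fwd H₂₃ K₂₃ φ₂₃ ((K₁₂ : Set G₂) * (H₂₃ : Set G₂)) = (K₁₃ : Set G₃) * (K₂₃ : Set G₃))
    (h123c : fwd H₁₃ K₁₃ φ₁₃ ((H₁₂ : Set G₁) * (H₁₃ : Set G₁)) = (K₁₃ : Set G₃) * (K₂₃ : Set G₃))
    (h123d : ∀ Q : Set G₁, IsUnionOfCosets ((H₁₂ : Set G₁) * (H₁₃ : Set G₁)) Q →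
      fwd H₂₃ K₂₃ φ₂₃ (fwd H₁₂ K₁₂ φ₁₂ Q) = fwd H₁₃ K₁₃ φ₁₃ (C₁₂₃⁻¹ * Q * C₁₂₃))
    -- semi-frame conditions for the triple (1,2,4)
    (h124a : fwd H₁₂ K₁₂ φ₁₂ ((H₁₂ : Set G₁) * (H₁₄ : Set G₁)) = (K₁₂ : Set G₂) * (H₂₄ : Set G₂))
    -- semi-frame conditions for the triple (2,3,4)
    (h234a : fwd H₂₃ K₂₃ φ₂₃ ((H₂₃ : Set G₂) * (H₂₄ : Set G₂)) = (K₂₃ : Set G₃) * (H₃₄ : Set G₃)) :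
    List.TFAE
      [ (∃ (a : G₁ ⧸ H₁₂) (b : G₂ ⧸ H₂₃) (c : G₃ ⧸ H₃₄),
          (⋃ γ ∈ {γ : G₁ ⧸ H₁₃ |
              cosetOf H₁₃ γ ⊆
                bwd H₁₂ K₁₂ φ₁₂ (cosetOf K₁₂ (φ₁₂ a) * cosetOf H₂₃ b) * C₁₂₃},
            unionAtoms H₁₄ K₁₄ φ₁₄
              (bwd H₁₃ K₁₃ φ₁₃ (cosetOf K₁₃ (φ₁₃ γ) * cosetOf H₃₄ c) * C₁₃₄)) =
          (⋃ e ∈ {e : G₂ ⧸ H₂₄ |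
              cosetOf H₂₄ e ⊆
                bwd H₂₃ K₂₃ φ₂₃ (cosetOf K₂₃ (φ₂₃ b) * cosetOf H₃₄ c) * C₂₃₄},
            unionAtoms H₁₄ K₁₄ φ₁₄
              (bwd H₁₂ K₁₂ φ₁₂ (cosetOf K₁₂ (φ₁₂ a) * cosetOf H₂₄ e) * C₁₂₄))),
        (∀ (a : G₁ ⧸ H₁₂) (b : G₂ ⧸ H₂₃) (c : G₃ ⧸ H₃₄),
          (⋃ γ ∈ {γ : G₁ ⧸ H₁₃ |
              cosetOf H₁₃ γ ⊆
                bwd H₁₂ K₁₂ φ₁₂ (cosetOf K₁₂ (φ₁₂ a) * cosetOf H₂₃ b) * C₁₂₃},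
            unionAtoms H₁₄ K₁₄ φ₁₄
              (bwd H₁₃ K₁₃ φ₁₃ (cosetOf K₁₃ (φ₁₃ γ) * cosetOf H₃₄ c) * C₁₃₄)) =
          (⋃ e ∈ {e : G₂ ⧸ H₂₄ |
              cosetOf H₂₄ e ⊆
                bwd H₂₃ K₂₃ φ₂₃ (cosetOf K₂₃ (φ₂₃ b) * cosetOf H₃₄ c) * C₂₃₄},
            unionAtoms H₁₄ K₁₄ φ₁₄
              (bwd H₁₂ K₁₂ φ₁₂ (cosetOf K₁₂ (φ₁₂ a) * cosetOf H₂₄ e) * C₁₂₄))),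
        C₁₂₃ * C₁₃₄ = bwd H₁₂ K₁₂ φ₁₂ (C₂₃₄ * (K₁₂ : Set G₂)) * C₁₂₄ ] := by
  have key := tensor_assoc_iff (φ₁₄ := φ₁₄) hC₁₂₃ hC₁₃₄ hC₂₃₄ hC₁₂₄ h123a h123b h123c h123d
    h124a h234a
  tfae_have 1 → 2 := fun ⟨a, b, c, h⟩ a' b' c' ↦ (key a' b' c').2 ((key a b c).1 h)
  tfae_have 2 → 3 := fun h ↦ (key 1 1 (1 : G₃)).1 (h 1 1 (1 : G₃))
  tfae_have 3 → 1 := fun h ↦ ⟨1, 1, (1 : G₃), (key 1 1 (1 : G₃)).2 h⟩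
  tfae_finish

/-- **Associative Law Theorem.** -/
theorem associative_law_theorem
    {G₁ G₂ G₃ G₄ : Type*} [Group G₁] [Group G₂] [Group G₃] [Group G₄]
    (H₁₂ : Subgroup G₁) (K₁₂ : Subgroup G₂) (H₁₃ : Subgroup G₁) (K₁₃ : Subgroup G₃)
    (H₁₄ : Subgroup G₁) (K₁₄ : Subgroup G₄) (H₂₃ : Subgroup G₂) (K₂₃ : Subgroup G₃)
    (H₂₄ : Subgroup G₂) (K₂₄ : Subgroup G₄) (H₃₄ : Subgroup G₃) (K₃₄ : Subgroup G₄)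
    [H₁₂.Normal] [K₁₂.Normal] [H₁₃.Normal] [K₁₃.Normal] [H₁₄.Normal] [K₁₄.Normal]
    [H₂₃.Normal] [K₂₃.Normal] [H₂₄.Normal] [K₂₄.Normal] [H₃₄.Normal] [K₃₄.Normal]
    (φ₁₂ : G₁ ⧸ H₁₂ ≃* G₂ ⧸ K₁₂) (φ₁₃ : G₁ ⧸ H₁₃ ≃* G₃ ⧸ K₁₃)
    (φ₁₄ : G₁ ⧸ H₁₄ ≃* G₄ ⧸ K₁₄) (φ₂₃ : G₂ ⧸ H₂₃ ≃* G₃ ⧸ K₂₃)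
    (φ₂₄ : G₂ ⧸ H₂₄ ≃* G₄ ⧸ K₂₄) (φ₃₄ : G₃ ⧸ H₃₄ ≃* G₄ ⧸ K₃₄)
    (C₁₂₃ : Set G₁) (hC₁₂₃ : IsLeftCosetSet ((H₁₂ : Set G₁) * (H₁₃ : Set G₁)) C₁₂₃)
    (C₁₃₄ : Set G₁) (hC₁₃₄ : IsLeftCosetSet ((H₁₃ : Set G₁) * (H₁₄ : Set G₁)) C₁₃₄)
    (C₂₃₄ : Set G₂) (hC₂₃₄ : IsLeftCosetSet ((H₂₃ : Set G₂) * (H₂₄ : Set G₂)) C₂₃₄)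
    (C₁₂₄ : Set G₁) (hC₁₂₄ : IsLeftCosetSet ((H₁₂ : Set G₁) * (H₁₄ : Set G₁)) C₁₂₄)
    -- semi-frame conditions for the triple (1,2,3)
    (h123a : fwd H₁₂ K₁₂ φ₁₂ ((H₁₂ : Set G₁) * (H₁₃ : Set G₁)) = (K₁₂ : Set G₂) * (H₂₃ : Set G₂))
    (h123b : fwd H₂₃ K₂₃ φ₂₃ ((K₁₂ : Set G₂) * (H₂₃ : Set G₂)) = (K₁₃ : Set G₃) * (K₂₃ : Set G₃))
    (h123c : fwd H₁₃ K₁₃ φ₁₃ ((H₁₂ : Set G₁) * (H₁₃ : Set G₁)) = (K₁₃ : Set G₃) * (K₂₃ : Set G₃))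
    (h123d : ∀ Q : Set G₁, IsUnionOfCosets ((H₁₂ : Set G₁) * (H₁₃ : Set G₁)) Q →
      fwd H₂₃ K₂₃ φ₂₃ (fwd H₁₂ K₁₂ φ₁₂ Q) = fwd H₁₃ K₁₃ φ₁₃ (C₁₂₃⁻¹ * Q * C₁₂₃))
    -- semi-frame conditions for the triple (1,2,4)
    (h124a : fwd H₁₂ K₁₂ φ₁₂ ((H₁₂ : Set G₁) * (H₁₄ : Set G₁)) = (K₁₂ : Set G₂) * (H₂₄ : Set G₂))
    (h124b : fwd H₂₄ K₂₄ φ₂₄ ((K₁₂ : Set G₂) * (H₂₄ : Set G₂)) = (K₁₄ : Set G₄) * (K₂₄ : Set G₄))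
    (h124c : fwd H₁₄ K₁₄ φ₁₄ ((H₁₂ : Set G₁) * (H₁₄ : Set G₁)) = (K₁₄ : Set G₄) * (K₂₄ : Set G₄))
    (h124d : ∀ Q : Set G₁, IsUnionOfCosets ((H₁₂ : Set G₁) * (H₁₄ : Set G₁)) Q →
      fwd H₂₄ K₂₄ φ₂₄ (fwd H₁₂ K₁₂ φ₁₂ Q) = fwd H₁₄ K₁₄ φ₁₄ (C₁₂₄⁻¹ * Q * C₁₂₄))
    -- semi-frame conditions for the triple (1,3,4)
    (h134a : fwd H₁₃ K₁₃ φ₁₃ ((H₁₃ : Set G₁) * (H₁₄ : Set G₁)) = (K₁₃ : Set G₃) * (H₃₄ : Set G₃))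
    (h134b : fwd H₃₄ K₃₄ φ₃₄ ((K₁₃ : Set G₃) * (H₃₄ : Set G₃)) = (K₁₄ : Set G₄) * (K₃₄ : Set G₄))
    (h134c : fwd H₁₄ K₁₄ φ₁₄ ((H₁₃ : Set G₁) * (H₁₄ : Set G₁)) = (K₁₄ : Set G₄) * (K₃₄ : Set G₄))
    (h134d : ∀ Q : Set G₁, IsUnionOfCosets ((H₁₃ : Set G₁) * (H₁₄ : Set G₁)) Q →
      fwd H₃₄ K₃₄ φ₃₄ (fwd H₁₃ K₁₃ φ₁₃ Q) = fwd H₁₄ K₁₄ φ₁₄ (C₁₃₄⁻¹ * Q * C₁₃₄))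
    -- semi-frame conditions for the triple (2,3,4)
    (h234a : fwd H₂₃ K₂₃ φ₂₃ ((H₂₃ : Set G₂) * (H₂₄ : Set G₂)) = (K₂₃ : Set G₃) * (H₃₄ : Set G₃))
    (h234b : fwd H₃₄ K₃₄ φ₃₄ ((K₂₃ : Set G₃) * (H₃₄ : Set G₃)) = (K₂₄ : Set G₄) * (K₃₄ : Set G₄))
    (h234c : fwd H₂₄ K₂₄ φ₂₄ ((H₂₃ : Set G₂) * (H₂₄ : Set G₂)) = (K₂₄ : Set G₄) * (K₃₄ : Set G₄))
    (h234d : ∀ Q : Set G₂, IsUnionOfCosets ((H₂₃ : Set G₂) * (H₂₄ : Set G₂)) Q →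
      fwd H₃₄ K₃₄ φ₃₄ (fwd H₂₃ K₂₃ φ₂₃ Q) = fwd H₂₄ K₂₄ φ₂₄ (C₂₃₄⁻¹ * Q * C₂₃₄)) :
    List.TFAE
      [ (∃ (a : G₁ ⧸ H₁₂) (b : G₂ ⧸ H₂₃) (c : G₃ ⧸ H₃₄),
          (⋃ γ ∈ {γ : G₁ ⧸ H₁₃ |
              cosetOf H₁₃ γ ⊆
                bwd H₁₂ K₁₂ φ₁₂ (cosetOf K₁₂ (φ₁₂ a) * cosetOf H₂₃ b) * C₁₂₃},
            unionAtoms H₁₄ K₁₄ φ₁₄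
              (bwd H₁₃ K₁₃ φ₁₃ (cosetOf K₁₃ (φ₁₃ γ) * cosetOf H₃₄ c) * C₁₃₄)) =
          (⋃ e ∈ {e : G₂ ⧸ H₂₄ |
              cosetOf H₂₄ e ⊆
                bwd H₂₃ K₂₃ φ₂₃ (cosetOf K₂₃ (φ₂₃ b) * cosetOf H₃₄ c) * C₂₃₄},
            unionAtoms H₁₄ K₁₄ φ₁₄
              (bwd H₁₂ K₁₂ φ₁₂ (cosetOf K₁₂ (φ₁₂ a) * cosetOf H₂₄ e) * C₁₂₄))),
        (∀ (a : G₁ ⧸ H₁₂) (b : G₂ ⧸ H₂₃) (c : G₃ ⧸ H₃₄),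
          (⋃ γ ∈ {γ : G₁ ⧸ H₁₃ |
              cosetOf H₁₃ γ ⊆
                bwd H₁₂ K₁₂ φ₁₂ (cosetOf K₁₂ (φ₁₂ a) * cosetOf H₂₃ b) * C₁₂₃},
            unionAtoms H₁₄ K₁₄ φ₁₄
              (bwd H₁₃ K₁₃ φ₁₃ (cosetOf K₁₃ (φ₁₃ γ) * cosetOf H₃₄ c) * C₁₃₄)) =
          (⋃ e ∈ {e : G₂ ⧸ H₂₄ |
              cosetOf H₂₄ e ⊆
                bwd H₂₃ K₂₃ φ₂₃ (cosetOf K₂₃ (φ₂₃ b) * cosetOf H₃₄ c) * C₂₃₄},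
            unionAtoms H₁₄ K₁₄ φ₁₄
              (bwd H₁₂ K₁₂ φ₁₂ (cosetOf K₁₂ (φ₁₂ a) * cosetOf H₂₄ e) * C₁₂₄))),
        C₁₂₃ * C₁₃₄ = bwd H₁₂ K₁₂ φ₁₂ (C₂₃₄ * (K₁₂ : Set G₂)) * C₁₂₄ ] :=
  associative_law_theorem_general H₁₂ K₁₂ H₁₃ K₁₃ H₁₄ K₁₄ H₂₃ K₂₃ H₂₄ H₃₄ φ₁₂ φ₁₃ φ₁₄ φ₂₃ C₁₂₃ hC₁₂₃
    C₁₃₄ hC₁₃₄ C₂₃₄ hC₂₃₄ C₁₂₄ hC₁₂₄ h123a h123b h123c h123d h124a h234a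

end CosetRA
end

section
/- Assume the pre-semi-frame conditions (SF3): φ₁[N₁·N₃] = M₁·N₂, φ₂[M₁·N₂] = M₃·M₂, and φ₃[N₁·N₃] = M₃·M₂, and let C ⊆ G₁ be a left coset of N₁·N₃ satisfying the semi-frame condition (SF4): for every Q ⊆ G₁ that is a union of left cosets of N₁·N₃, φ₂[φ₁[Q]] = φ₃[C⁻¹·Q·C]. Then the following are equivalent: (i) for some a ∈ G₁⧸N₁ and b ∈ G₂⧸N₂ there is a set S ⊆ G₁⧸N₃ with R¹_a ∘ R²_b = ⋃_{c∈S} R³_c; (ii) for all a ∈ G₁⧸N₁ and b ∈ G₂⧸N₂ there is such a set S; (iii) C·D = D·C for every left coset D of N₁·N₃ in G₁, i.e. C lies in the center of the quotient group G₁⧸(N₁·N₃). -/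
open scoped Pointwise

namespace CosetRA

variable {G G' : Type*}

/-! Write `P = N₁N₃`, `C = g₀P` and `a = [α]`. By (SF3a), `φ₂[φ₁[{x}]]` only depends on the coset
`xP`, so (SF4) turns `R¹_a ∘ R²_b` into the relation `φ₃⁻¹[k] ≡ g₀⁻¹gαg₀ · φ₃⁻¹(φ₂ b) (mod P)`.
A relation `{(g, k) | f (φ₃⁻¹[k]) = F g}`, with `f : G₁⧸N₃ → G₁⧸P` the projection, is a union
of atoms iff `F g = f [g] · F 1` for all `g`; here this says `g₀⁻¹gg₀ ≡ g (mod P)` for all `g`,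
i.e. that `g₀P` is central in `G₁⧸P`, whatever `a` and `b` are. -/

section Cosets

variable [Group G] (H : Subgroup G)

theorem isUnionOfCosets_smul_coe (x : G) : IsUnionOfCosets (H : Set G) (x • (H : Set G)) := by
  rintro _ ⟨h, hh, rfl⟩
  simp only [smul_eq_mul, ← smul_smul, smul_coe_set hh, subset_rfl]

variable [H.Normal]

theorem inv_smul_coe (x : G) : (x • (H : Set G))⁻¹ = x⁻¹ • (H : Set G) := by
  rw [Set.inv_smul_set_distrib, inv_coe_set, ← eq_cosets_of_normal H ‹_›]

theorem smul_coe_mul_smul_coe (x y : G) :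
    x • (H : Set G) * y • (H : Set G) = (x * y) • (H : Set G) := by
  rw [smul_mul_assoc, ← Set.op_smul_set_mul_eq_mul_smul_set, ← eq_cosets_of_normal H ‹_›,
    smul_mul_assoc, coe_mul_coe, smul_smul]

theorem smul_coe_mul_comm_iff_mem_center (x : G) :
    (∀ D : Set G, IsLeftCosetSet (H : Set G) D → x • (H : Set G) * D = D * x • (H : Set G)) ↔
      (x : G ⧸ H) ∈ Subgroup.center (G ⧸ H) := by
  rw [Subgroup.mem_center_iff, QuotientGroup.mk_surjective.forall]
  constructor
  · intro h d
    have hd := h _ ⟨d, rfl⟩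
    rw [smul_coe_mul_smul_coe, smul_coe_mul_smul_coe, leftCoset_eq_iff, ← QuotientGroup.eq] at hd
    exact hd.symm
  · rintro h _ ⟨d, rfl⟩
    rw [smul_coe_mul_smul_coe, smul_coe_mul_smul_coe, leftCoset_eq_iff, ← QuotientGroup.eq,
      QuotientGroup.mk_mul, QuotientGroup.mk_mul, h]

end Cosets

section Fwd

variable [Group G] [Group G'] {N : Subgroup G} {M : Subgroup G'} [N.Normal] [M.Normal]
  (φ : G ⧸ N ≃* G' ⧸ M)

theorem fwd_mono {S T : Set G} (h : S ⊆ T) : fwd N M φ S ⊆ fwd N M φ T :=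
  fun _ ⟨g, hg, hφ⟩ => ⟨g, h hg, hφ⟩

theorem one_mem_fwd {S : Set G} (hS : 1 ∈ S) : 1 ∈ fwd N M φ S :=
  ⟨1, hS, by simp⟩

theorem fwd_smul (x : G) (S : Set G) : fwd N M φ (x • S) = fwd N M φ {x} * fwd N M φ S := by
  ext h
  constructor
  · rintro ⟨_, hxs, hφ⟩
    obtain ⟨s, hs, rfl⟩ := Set.mem_smul_set.1 hxs
    obtain ⟨y, hy⟩ := QuotientGroup.mk_surjective (φ x)
    refine ⟨y, ⟨x, rfl, hy.symm⟩, y⁻¹ * h, ⟨s, hs, ?_⟩, mul_inv_cancel_left y h⟩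
    rw [QuotientGroup.mk_mul, QuotientGroup.mk_inv, ← hφ, hy, smul_eq_mul, QuotientGroup.mk_mul,
      map_mul, inv_mul_cancel_left]
  · rintro ⟨y, ⟨x', hx', hy⟩, z, ⟨s, hs, hz⟩, rfl⟩
    rw [Set.mem_singleton_iff.1 hx'] at hy
    exact ⟨x * s, Set.smul_mem_smul_set hs, by rw [QuotientGroup.mk_mul, map_mul, hy, hz]; rfl⟩

theorem fwd_mul_coe (S : Set G) : fwd N M φ (S * N) = fwd N M φ S := by
  refine subset_antisymm ?_ (fwd_mono φ (Set.subset_mul_left S N.one_mem))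
  rintro h ⟨_, ⟨s, hs, n, hn, rfl⟩, hφ⟩
  exact ⟨s, hs, by rwa [QuotientGroup.mk_mul_of_mem s hn] at hφ⟩

theorem fwd_mul_coe_target (S : Set G) : fwd N M φ S * M = fwd N M φ S := by
  refine subset_antisymm ?_ (Set.subset_mul_left _ M.one_mem)
  rintro _ ⟨h, ⟨s, hs, hφ⟩, m, hm, rfl⟩
  exact ⟨s, hs, by rw [QuotientGroup.mk_mul_of_mem h hm, hφ]⟩

theorem mem_fwd_smul_coe_iff {H : Subgroup G} [H.Normal] (f : G ⧸ N →* G ⧸ H)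
    (hf : ∀ g : G, f g = g) (y : G) (k : G') :
    k ∈ fwd N M φ (y • (H : Set G)) ↔ f (φ.symm k) = y := by
  obtain ⟨z, hz⟩ := QuotientGroup.mk_surjective (φ.symm k)
  rw [← hz, hf]
  constructor
  · rintro ⟨_, ⟨h, hh, rfl⟩, hφ⟩
    have hN : ((y * h : G) : G ⧸ N) = z := by rw [hz, φ.eq_symm_apply]; exact hφ
    rw [← QuotientGroup.mk_mul_of_mem y hh, ← hf (y * h), hN, hf]
  · intro hzy
    exact ⟨z, ⟨y⁻¹ * z, QuotientGroup.eq.1 hzy.symm, mul_inv_cancel_left y z⟩,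
      by rw [hz, φ.apply_symm_apply]⟩

theorem mem_atom_iff (a : G ⧸ N) (g : G) (k : G') :
    (g, k) ∈ atom N M φ a ↔ φ.symm k = g * a := by
  rw [atom, Set.mem_ofPred_eq, ← map_mul, MulEquiv.symm_apply_eq]

theorem exists_eq_iUnion_atom_iff {Q : Type*} [Group Q] (f : G ⧸ N →* Q)
    (hf : Function.Surjective f) (F : G → Q) :
    (∃ S : Set (G ⧸ N), {p : G × G' | f (φ.symm p.2) = F p.1} = ⋃ c ∈ S, atom N M φ c) ↔
      ∀ g : G, F g = f g * F 1 := by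
  have mem_iUnion (S : Set (G ⧸ N)) (g : G) (k : G') :
      (g, k) ∈ ⋃ c ∈ S, atom N M φ c ↔ ∃ c ∈ S, φ.symm k = g * c := by
    simp only [Set.mem_iUnion, mem_atom_iff, exists_prop]
  constructor
  · rintro ⟨S, hS⟩ g
    have hmem (g : G) (k : G') : f (φ.symm k) = F g ↔ ∃ c ∈ S, φ.symm k = g * c := by
      rw [← mem_iUnion, ← hS, Set.mem_ofPred_eq]
    obtain ⟨z, hz⟩ := hf (F g)
    obtain ⟨k, hk⟩ := QuotientGroup.mk_surjective (φ z)
    obtain ⟨c, hc, hkc⟩ := (hmem g k).1 (by rw [hk, φ.symm_apply_apply, hz])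
    obtain ⟨k', hk'⟩ := QuotientGroup.mk_surjective (φ c)
    have hc1 : f c = F 1 := by
      simpa [hk'] using (hmem 1 k').2 ⟨c, hc, by simp [hk']⟩
    rw [← hz, ← φ.symm_apply_apply z, ← hk, hkc, map_mul, hc1]
  · intro hF
    refine ⟨f ⁻¹' {F 1}, Set.ext fun ⟨g, k⟩ => ?_⟩
    rw [mem_iUnion, Set.mem_ofPred_eq, hF g]
    constructor
    · intro h
      refine ⟨(g : G ⧸ N)⁻¹ * φ.symm k, ?_, (mul_inv_cancel_left _ _).symm⟩
      rw [Set.mem_preimage, map_mul, map_inv, h, inv_mul_cancel_left, Set.mem_singleton_iff]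
    · rintro ⟨c, hc, hkc⟩
      rw [hkc, map_mul, Set.mem_preimage.1 hc]

end Fwd

section Composition

variable {G₁ G₂ G₃ : Type*} [Group G₁] [Group G₂] [Group G₃]
  {N₁ N₃ P : Subgroup G₁} {M₁ N₂ : Subgroup G₂} {M₂ M₃ : Subgroup G₃}
  [N₁.Normal] [N₃.Normal] [M₁.Normal] [N₂.Normal] [M₂.Normal] [M₃.Normal]
  (φ₁ : G₁ ⧸ N₁ ≃* G₂ ⧸ M₁) (φ₂ : G₂ ⧸ N₂ ≃* G₃ ⧸ M₂) (φ₃ : G₁ ⧸ N₃ ≃* G₃ ⧸ M₃)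

theorem mem_rcomp_atom_iff {b : G₂ ⧸ N₂} {β : G₃} (hβ : (β : G₃ ⧸ M₂) = φ₂ b) (α g : G₁) (k : G₃) :
    (g, k) ∈ rcomp (atom N₁ M₁ φ₁ α) (atom N₂ M₂ φ₂ b) ↔
      k * β⁻¹ ∈ fwd N₂ M₂ φ₂ (fwd N₁ M₁ φ₁ {g * α}) := by
  simp only [rcomp, atom, fwd, Set.mem_ofPred_eq, Set.mem_singleton_iff, exists_eq_left,
    QuotientGroup.mk_mul, QuotientGroup.mk_inv, map_mul, hβ, eq_mul_inv_iff_mul_eq]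
  exact exists_congr fun h => and_congr eq_comm eq_comm

theorem fwd_fwd_smul_coe (hP : fwd N₁ M₁ φ₁ P ⊆ M₁ * N₂) (x : G₁) :
    fwd N₂ M₂ φ₂ (fwd N₁ M₁ φ₁ (x • (P : Set G₁))) = fwd N₂ M₂ φ₂ (fwd N₁ M₁ φ₁ {x}) := by
  rw [fwd_smul]
  refine subset_antisymm ?_ (fwd_mono _ (Set.subset_mul_left _ (one_mem_fwd _ P.one_mem)))
  calc fwd N₂ M₂ φ₂ (fwd N₁ M₁ φ₁ {x} * fwd N₁ M₁ φ₁ P)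
      ⊆ fwd N₂ M₂ φ₂ (fwd N₁ M₁ φ₁ {x} * (M₁ * N₂)) := fwd_mono _ (Set.mul_subset_mul_left hP)
    _ = fwd N₂ M₂ φ₂ (fwd N₁ M₁ φ₁ {x}) := by rw [← mul_assoc, fwd_mul_coe_target, fwd_mul_coe]

variable {φ₁ φ₂ φ₃} {g₀ : G₁}

theorem rcomp_atom_eq (hP : fwd N₁ M₁ φ₁ P ⊆ M₁ * N₂)
    (hshift : ∀ x : G₁, fwd N₂ M₂ φ₂ (fwd N₁ M₁ φ₁ (x • (P : Set G₁))) =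
      fwd N₃ M₃ φ₃ ((g₀⁻¹ * x * g₀) • (P : Set G₁)))
    {b : G₂ ⧸ N₂} {β : G₃} (hβ : (β : G₃ ⧸ M₂) = φ₂ b) (α : G₁) :
    rcomp (atom N₁ M₁ φ₁ α) (atom N₂ M₂ φ₂ b) =
      {p | p.2 * β⁻¹ ∈ fwd N₃ M₃ φ₃ ((g₀⁻¹ * (p.1 * α) * g₀) • (P : Set G₁))} := by
  ext ⟨g, k⟩
  rw [mem_rcomp_atom_iff φ₁ φ₂ hβ, ← fwd_fwd_smul_coe φ₁ φ₂ hP, hshift]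
  rfl

theorem exists_rcomp_atom_eq_iUnion_iff [P.Normal] (hN₃ : N₃ ≤ P) (hP : fwd N₁ M₁ φ₁ P ⊆ M₁ * N₂)
    (hshift : ∀ x : G₁, fwd N₂ M₂ φ₂ (fwd N₁ M₁ φ₁ (x • (P : Set G₁))) =
      fwd N₃ M₃ φ₃ ((g₀⁻¹ * x * g₀) • (P : Set G₁)))
    (a : G₁ ⧸ N₁) (b : G₂ ⧸ N₂) :
    (∃ S : Set (G₁ ⧸ N₃), rcomp (atom N₁ M₁ φ₁ a) (atom N₂ M₂ φ₂ b) = ⋃ c ∈ S, atom N₃ M₃ φ₃ c) ↔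
      (g₀ : G₁ ⧸ P) ∈ Subgroup.center (G₁ ⧸ P) := by
  obtain ⟨α, rfl⟩ := QuotientGroup.mk_surjective a
  obtain ⟨β, hβ⟩ := QuotientGroup.mk_surjective (φ₂ b)
  set f := QuotientGroup.map N₃ P (MonoidHom.id G₁) hN₃
  have hf (g : G₁) : f g = g := rfl
  have hcomp : rcomp (atom N₁ M₁ φ₁ α) (atom N₂ M₂ φ₂ b) =
      {p | f (φ₃.symm p.2) = ((g₀⁻¹ * (p.1 * α) * g₀ : G₁) : G₁ ⧸ P) * f (φ₃.symm β)} := by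
    rw [rcomp_atom_eq hP hshift hβ]
    ext ⟨g, k⟩
    rw [Set.mem_ofPred_eq, Set.mem_ofPred_eq, mem_fwd_smul_coe_iff φ₃ f hf, QuotientGroup.mk_mul,
      QuotientGroup.mk_inv, map_mul, map_mul, map_inv, map_inv, mul_inv_eq_iff_eq_mul]
  have hsurj : Function.Surjective f := QuotientGroup.mk_surjective.forall.2 fun g => ⟨g, hf g⟩
  rw [hcomp, Subgroup.mem_center_iff, QuotientGroup.mk_surjective.forall]
  refine (exists_eq_iUnion_atom_iff φ₃ f hsurj
    fun g => ((g₀⁻¹ * (g * α) * g₀ : G₁) : G₁ ⧸ P) * f (φ₃.symm β)).trans ?_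
  refine forall_congr' fun g => ?_
  simp only [hf, QuotientGroup.mk_mul, QuotientGroup.mk_inv, one_mul, ← mul_assoc, mul_left_inj]
  exact Commute.inv_left_iff.trans eq_comm

end Composition

theorem comp_closed_iff_central_general {G₁ G₂ G₃ : Type*} [Group G₁] [Group G₂] [Group G₃]
    (N₁ : Subgroup G₁) (M₁ : Subgroup G₂) (N₂ : Subgroup G₂) (M₂ : Subgroup G₃)
    (N₃ : Subgroup G₁) (M₃ : Subgroup G₃)
    [N₁.Normal] [M₁.Normal] [N₂.Normal] [M₂.Normal] [N₃.Normal] [M₃.Normal]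
    (φ₁ : G₁ ⧸ N₁ ≃* G₂ ⧸ M₁) (φ₂ : G₂ ⧸ N₂ ≃* G₃ ⧸ M₂) (φ₃ : G₁ ⧸ N₃ ≃* G₃ ⧸ M₃)
    (hSF3a : fwd N₁ M₁ φ₁ ((N₁ : Set G₁) * (N₃ : Set G₁)) = (M₁ : Set G₂) * (N₂ : Set G₂))
    (C : Set G₁) (hC : IsLeftCosetSet ((N₁ : Set G₁) * (N₃ : Set G₁)) C)
    (hSF4 : ∀ Q : Set G₁, IsUnionOfCosets ((N₁ : Set G₁) * (N₃ : Set G₁)) Q →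
      fwd N₂ M₂ φ₂ (fwd N₁ M₁ φ₁ Q) = fwd N₃ M₃ φ₃ (C⁻¹ * Q * C)) :
    List.TFAE
      [ (∃ (a : G₁ ⧸ N₁) (b : G₂ ⧸ N₂) (S : Set (G₁ ⧸ N₃)),
          rcomp (atom N₁ M₁ φ₁ a) (atom N₂ M₂ φ₂ b) = ⋃ c ∈ S, atom N₃ M₃ φ₃ c),
        (∀ (a : G₁ ⧸ N₁) (b : G₂ ⧸ N₂), ∃ S : Set (G₁ ⧸ N₃),
          rcomp (atom N₁ M₁ φ₁ a) (atom N₂ M₂ φ₂ b) = ⋃ c ∈ S, atom N₃ M₃ φ₃ c),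
        (∀ D : Set G₁, IsLeftCosetSet ((N₁ : Set G₁) * (N₃ : Set G₁)) D →
          C * D = D * C) ] := by
  rw [← Subgroup.mul_normal N₁ N₃] at hSF3a hC hSF4 ⊢
  obtain ⟨g₀, rfl⟩ := hC
  have hshift (x : G₁) : fwd N₂ M₂ φ₂ (fwd N₁ M₁ φ₁ (x • ((N₁ ⊔ N₃ : Subgroup G₁) : Set G₁))) =
      fwd N₃ M₃ φ₃ ((g₀⁻¹ * x * g₀) • ((N₁ ⊔ N₃ : Subgroup G₁) : Set G₁)) := by
    rw [hSF4 _ (isUnionOfCosets_smul_coe _ x), inv_smul_coe, smul_coe_mul_smul_coe,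
      smul_coe_mul_smul_coe]
  have key (a : G₁ ⧸ N₁) (b : G₂ ⧸ N₂) :=
    exists_rcomp_atom_eq_iUnion_iff le_sup_right hSF3a.le hshift a b
  rw [smul_coe_mul_comm_iff_mem_center]
  tfae_have 1 → 3 := fun ⟨a, b, h⟩ => (key a b).1 h
  tfae_have 3 → 2 := fun h a b => (key a b).2 h
  tfae_have 2 → 1 := fun h => ⟨1, 1, h 1 1⟩
  tfae_finish

/-- The relational composition of two atoms is a union of atoms exactly when the
shifting coset lies in the center of the quotient group. -/
theorem comp_closed_iff_central {G₁ G₂ G₃ : Type*} [Group G₁] [Group G₂] [Group G₃]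
    (N₁ : Subgroup G₁) (M₁ : Subgroup G₂) (N₂ : Subgroup G₂) (M₂ : Subgroup G₃)
    (N₃ : Subgroup G₁) (M₃ : Subgroup G₃)
    [N₁.Normal] [M₁.Normal] [N₂.Normal] [M₂.Normal] [N₃.Normal] [M₃.Normal]
    (φ₁ : G₁ ⧸ N₁ ≃* G₂ ⧸ M₁) (φ₂ : G₂ ⧸ N₂ ≃* G₃ ⧸ M₂) (φ₃ : G₁ ⧸ N₃ ≃* G₃ ⧸ M₃)
    (hSF3a : fwd N₁ M₁ φ₁ ((N₁ : Set G₁) * (N₃ : Set G₁)) = (M₁ : Set G₂) * (N₂ : Set G₂))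
    (hSF3b : fwd N₂ M₂ φ₂ ((M₁ : Set G₂) * (N₂ : Set G₂)) = (M₃ : Set G₃) * (M₂ : Set G₃))
    (hSF3c : fwd N₃ M₃ φ₃ ((N₁ : Set G₁) * (N₃ : Set G₁)) = (M₃ : Set G₃) * (M₂ : Set G₃))
    (C : Set G₁) (hC : IsLeftCosetSet ((N₁ : Set G₁) * (N₃ : Set G₁)) C)
    (hSF4 : ∀ Q : Set G₁, IsUnionOfCosets ((N₁ : Set G₁) * (N₃ : Set G₁)) Q →
      fwd N₂ M₂ φ₂ (fwd N₁ M₁ φ₁ Q) = fwd N₃ M₃ φ₃ (C⁻¹ * Q * C)) :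
    List.TFAE
      [ (∃ (a : G₁ ⧸ N₁) (b : G₂ ⧸ N₂) (S : Set (G₁ ⧸ N₃)),
          rcomp (atom N₁ M₁ φ₁ a) (atom N₂ M₂ φ₂ b) = ⋃ c ∈ S, atom N₃ M₃ φ₃ c),
        (∀ (a : G₁ ⧸ N₁) (b : G₂ ⧸ N₂), ∃ S : Set (G₁ ⧸ N₃),
          rcomp (atom N₁ M₁ φ₁ a) (atom N₂ M₂ φ₂ b) = ⋃ c ∈ S, atom N₃ M₃ φ₃ c),
        (∀ D : Set G₁, IsLeftCosetSet ((N₁ : Set G₁) * (N₃ : Set G₁)) D →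
          C * D = D * C) ] :=
  comp_closed_iff_central_general N₁ M₁ N₂ M₂ N₃ M₃ φ₁ φ₂ φ₃ hSF3a C hC hSF4

end CosetRA
end
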